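/- arXiv:1412.5435 — 2 statements merged into one kernel-verified Lean document; each statement's English description precedes it below -/
import Mathlib

section
/- Let μ, ν : S → [0,1] be fuzzy sets on a finite nonempty set S. If for all s ∈ S either μ(s) ≤ ν(s) ≤ 1/2 holds pointwise everywhere, or 1/2 ≤ ν(s) ≤ μ(s) holds pointwise everywhere, then ε(μ) ≤ ε(ν), where ε(μ) = (Σ_s min(μ(s), 1-μ(s))) / (Σ_s max(μ(s), 1-μ(s))). -/
theorem entropy_mono (S : Type*) [Fintype S] [Nonempty S] (μ ν : S → ℝ)
    (hμ : ∀ s, μ s ∈ Set.Icc (0:ℝ) 1) (hν : ∀ s, ν s ∈ Set.Icc (0:ℝ) 1)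
    (h : (∀ s, μ s ≤ ν s ∧ ν s ≤ 1 / 2) ∨ (∀ s, 1 / 2 ≤ ν s ∧ ν s ≤ μ s)) :
    (∑ s, min (μ s) (1 - μ s)) / (∑ s, max (μ s) (1 - μ s)) ≤
      (∑ s, min (ν s) (1 - ν s)) / (∑ s, max (ν s) (1 - ν s)) := by
  have hcard : (0:ℝ) < Fintype.card S := by
    exact_mod_cast Fintype.card_pos
  rcases h with h | h
  · have hμh : ∀ s, μ s ≤ 1/2 := fun s => (h s).1.trans (h s).2
    have e1 : (∑ s, min (μ s) (1 - μ s)) = ∑ s, μ s :=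
      Finset.sum_congr rfl (fun s _ => min_eq_left (by linarith [hμh s]))
    have e2 : (∑ s, max (μ s) (1 - μ s)) = ∑ s, (1 - μ s) :=
      Finset.sum_congr rfl (fun s _ => max_eq_right (by linarith [hμh s]))
    have e3 : (∑ s, min (ν s) (1 - ν s)) = ∑ s, ν s :=
      Finset.sum_congr rfl (fun s _ => min_eq_left (by linarith [(h s).2]))
    have e4 : (∑ s, max (ν s) (1 - ν s)) = ∑ s, (1 - ν s) :=
      Finset.sum_congr rfl (fun s _ => max_eq_right (by linarith [(h s).2]))
    rw [e1, e2, e3, e4]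
    have hd : (0:ℝ) < ∑ s, (1 - ν s) := by
      calc (0:ℝ) < ∑ _s : S, (1:ℝ)/2 := by
            rw [Finset.sum_const]; simp; positivity
        _ ≤ ∑ s, (1 - ν s) := Finset.sum_le_sum (fun s _ => by linarith [(h s).2])
    apply div_le_div₀
    · exact Finset.sum_nonneg (fun s _ => (hν s).1)
    · exact Finset.sum_le_sum (fun s _ => (h s).1)
    · exact hd
    · exact Finset.sum_le_sum (fun s _ => by linarith [(h s).1])
  · have hμh : ∀ s, 1/2 ≤ μ s := fun s => (h s).1.trans (h s).2
    have e1 : (∑ s, min (μ s) (1 - μ s)) = ∑ s, (1 - μ s) :=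
      Finset.sum_congr rfl (fun s _ => min_eq_right (by linarith [hμh s]))
    have e2 : (∑ s, max (μ s) (1 - μ s)) = ∑ s, μ s :=
      Finset.sum_congr rfl (fun s _ => max_eq_left (by linarith [hμh s]))
    have e3 : (∑ s, min (ν s) (1 - ν s)) = ∑ s, (1 - ν s) :=
      Finset.sum_congr rfl (fun s _ => min_eq_right (by linarith [(h s).1]))
    have e4 : (∑ s, max (ν s) (1 - ν s)) = ∑ s, ν s :=
      Finset.sum_congr rfl (fun s _ => max_eq_left (by linarith [(h s).1]))
    rw [e1, e2, e3, e4]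
    have hd : (0:ℝ) < ∑ s, ν s := by
      calc (0:ℝ) < ∑ _s : S, (1:ℝ)/2 := by
            rw [Finset.sum_const]; simp; positivity
        _ ≤ ∑ s, ν s := Finset.sum_le_sum (fun s _ => (h s).1)
    apply div_le_div₀
    · exact Finset.sum_nonneg (fun s _ => by linarith [(hν s).2])
    · exact Finset.sum_le_sum (fun s _ => by linarith [(h s).2])
    · exact hd
    · exact Finset.sum_le_sum (fun s _ => (h s).2)
end

section
/- For fuzzy sets μ, ν, ρ : S → [0,1] on a finite set S with μ ≤ ν ≤ ρ pointwise and Σ_s ρ(s) > 0, the similarity satisfies sim(μ, ρ) ≤ sim(μ, ν) and sim(μ, ρ) ≤ sim(ν, ρ), where sim(α, β) = (Σ_s min(α(s), β(s))) / (Σ_s max(α(s), β(s))). -/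
theorem sim_antitone (S : Type*) [Fintype S] (μ ν ρ : S → ℝ)
    (hμ : ∀ s, μ s ∈ Set.Icc (0:ℝ) 1) (hν : ∀ s, ν s ∈ Set.Icc (0:ℝ) 1)
    (hρ : ∀ s, ρ s ∈ Set.Icc (0:ℝ) 1)
    (h1 : ∀ s, μ s ≤ ν s) (h2 : ∀ s, ν s ≤ ρ s)
    (hden : 0 < ∑ s, ρ s) :
    (∑ s, min (μ s) (ρ s)) / (∑ s, max (μ s) (ρ s)) ≤
        (∑ s, min (μ s) (ν s)) / (∑ s, max (μ s) (ν s)) ∧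
      (∑ s, min (μ s) (ρ s)) / (∑ s, max (μ s) (ρ s)) ≤
        (∑ s, min (ν s) (ρ s)) / (∑ s, max (ν s) (ρ s)) := by
  have h13 : ∀ s, μ s ≤ ρ s := fun s => (h1 s).trans (h2 s)
  simp only [min_eq_left (h1 _), min_eq_left (h13 _), min_eq_left (h2 _),
    max_eq_right (h1 _), max_eq_right (h13 _), max_eq_right (h2 _)]
  have hμ0 : (0:ℝ) ≤ ∑ s, μ s := Finset.sum_nonneg fun s _ => (hμ s).1
  have hν0 : (0:ℝ) ≤ ∑ s, ν s := Finset.sum_nonneg fun s _ => (hν s).1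
  have hνρ : (∑ s, ν s) ≤ ∑ s, ρ s := Finset.sum_le_sum fun s _ => h2 s
  have hμν : (∑ s, μ s) ≤ ∑ s, ν s := Finset.sum_le_sum fun s _ => h1 s
  constructor
  · rcases eq_or_lt_of_le hν0 with h | h
    · have : (∑ s, μ s) = 0 := le_antisymm (h ▸ hμν) hμ0
      simp [this]
    · gcongr
  · gcongr
end
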